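/- arXiv:2404.05992 — 3 statements merged into one kernel-verified Lean document; each statement's English description precedes it below -/
import Mathlib

section
/- Let G be a finite simple graph and let {(T_i,β_i)}_{i∈[k]} be a non-edge-separating family of k tree-decompositions of G. Then G has a complete k'-tree-median-decomposition for some k' ≤ k; in particular, tmd(G) ≤ k. -/
open SimpleGraph

/-- A graph is chordal if it contains no hole, i.e. no induced cycle of length at least four. -/
def Chordal {V : Type} (G : SimpleGraph V) : Prop :=
  ∀ n : ℕ, 4 ≤ n → IsEmpty (SimpleGraph.cycleGraph n ↪g G)

/-- `(T, β)` is a tree-decomposition of `G`. -/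
structure IsTreeDecomp {V B : Type} (G : SimpleGraph V) (T : SimpleGraph B) (β : B → Set V) :
    Prop where
  isTree : T.IsTree
  exists_bag : ∀ v : V, ∃ t, v ∈ β t
  adj_bag : ∀ ⦃u v : V⦄, G.Adj u v → ∃ t, u ∈ β t ∧ v ∈ β t
  support_connected : ∀ v : V, (T.induce {t | v ∈ β t}).Connected

/-- The chordality of `G`. -/
noncomputable def chor {V : Type} [Fintype V] (G : SimpleGraph V) : ℕ :=
  sInf {k | 0 < k ∧ ∃ H : Fin k → SimpleGraph V, (∀ i, Chordal (H i)) ∧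
    ∀ u v : V, G.Adj u v ↔ ∀ i, (H i).Adj u v}

/-- The Cartesian (box) product of a family of graphs. -/
def boxProdPi {ι : Type} {B : ι → Type} (T : ∀ i, SimpleGraph (B i)) :
    SimpleGraph (∀ i, B i) where
  Adj x y := ∃ i, (T i).Adj (x i) (y i) ∧ ∀ j, j ≠ i → x j = y j
  symm := by
    constructor
    rintro x y ⟨i, h, hj⟩
    exact ⟨i, h.symm, fun j hji => (hj j hji).symm⟩
  loopless := by
    constructor
    rintro x ⟨i, h, -⟩
    exact SimpleGraph.irrefl _ h

/-- The geodesic interval `I(u,v)` of a graph. -/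
def geoInterval {V : Type} (G : SimpleGraph V) (u v : V) : Set V :=
  {x | G.dist u v = G.dist u x + G.dist x v}

/-- A set of vertices is (geodesically) convex. -/
def GeoConvex {V : Type} (G : SimpleGraph V) (S : Set V) : Prop :=
  ∀ u ∈ S, ∀ v ∈ S, geoInterval G u v ⊆ S

/-- A median graph. -/
def MedianGraph {V : Type} (M : SimpleGraph V) : Prop :=
  M.Connected ∧ ∀ u v w : V,
    ∃! x, x ∈ geoInterval M u v ∩ geoInterval M u w ∩ geoInterval M v w

/-- `φ` is an isometric embedding of `G` into `H`. -/
def IsIsometricEmbedding {V W : Type} (G : SimpleGraph V) (H : SimpleGraph W)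
    (φ : V → W) : Prop :=
  ∀ u v : V, H.dist (φ u) (φ v) = G.dist u v

/-- `M` has tree-dimension at most `k`. -/
def TreeDimLE {V : Type} (M : SimpleGraph V) (k : ℕ) : Prop :=
  ∃ (B : Fin k → Type) (_ : ∀ i, Fintype (B i)) (T : ∀ i, SimpleGraph (B i)),
    (∀ i, (T i).IsTree) ∧
    ∃ φ : V → (∀ i, B i), IsIsometricEmbedding M (boxProdPi T) φ

/-- `G` has a complete `k`-tree-median-decomposition. -/
def HasCompleteTMD {V : Type} (G : SimpleGraph V) (k : ℕ) : Prop :=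
  ∃ (X : Type) (_ : Fintype X) (M : SimpleGraph X) (γ : X → Set V),
    MedianGraph M ∧ TreeDimLE M k ∧
    (∀ v : V, ({x : X | v ∈ γ x}).Nonempty ∧ GeoConvex M {x : X | v ∈ γ x}) ∧
    (∀ ⦃u v : V⦄, G.Adj u v → ({x : X | u ∈ γ x} ∩ {x : X | v ∈ γ x}).Nonempty) ∧
    (∀ x : X, G.IsClique (γ x))

/-- The tree-median-dimension of `G`. -/
noncomputable def tmd {V : Type} [Fintype V] (G : SimpleGraph V) : ℕ :=
  sInf {k | 0 < k ∧ HasCompleteTMD G k}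

/-- `T` is a path graph. -/
def IsPathGraph {B : Type} (T : SimpleGraph B) : Prop :=
  ∃ n : ℕ, Nonempty (T ≃g SimpleGraph.pathGraph n)

/-- A graph is an interval graph if it can be represented by nonempty closed
intervals of the real line. -/
def IntervalGraph {V : Type} (G : SimpleGraph V) : Prop :=
  ∃ I : V → Set ℝ, (∀ v, ∃ a b : ℝ, a ≤ b ∧ I v = Set.Icc a b) ∧
    ∀ u v : V, u ≠ v → (G.Adj u v ↔ (I u ∩ I v).Nonempty)

/-- `(T, β)` is a representation of the chordal graph `H`. -/
structure IsRepresentation {V B : Type} (H : SimpleGraph V) (T : SimpleGraph B)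
    (β : B → Set V) : Prop where
  isTree : T.IsTree
  support_connected : ∀ v : V, (T.induce {t | v ∈ β t}).Connected
  adj_iff : ∀ u v : V, u ≠ v →
    (H.Adj u v ↔ ({t : B | u ∈ β t} ∩ {t : B | v ∈ β t}).Nonempty)

/-- `G` has path-width at most `k`. -/
def PathwidthLE {V : Type} (G : SimpleGraph V) (k : ℕ) : Prop :=
  ∃ (B : Type) (_ : Fintype B) (P : SimpleGraph B) (β : B → Set V),
    IsPathGraph P ∧ IsTreeDecomp G P β ∧ ∀ t : B, (β t).ncard ≤ k + 1

/-- The radius of `T` is at most `k`. -/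
def RadiusLE {B : Type} (T : SimpleGraph B) (k : ℕ) : Prop :=
  ∃ r : B, ∀ t : B, T.dist r t ≤ k

/-- The lexicographic product of two graphs. -/
def lexProd {V W : Type} (G : SimpleGraph V) (H : SimpleGraph W) :
    SimpleGraph (V × W) where
  Adj x y := G.Adj x.1 y.1 ∨ (x.1 = y.1 ∧ H.Adj x.2 y.2)
  symm := by
    constructor
    rintro x y (h | ⟨h1, h2⟩)
    · exact Or.inl h.symm
    · exact Or.inr ⟨h1.symm, h2.symm⟩
  loopless := by
    constructor
    rintro x (h | ⟨-, h⟩) <;> exact SimpleGraph.irrefl _ h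

/-!
The box product of the `k` trees is a median graph of tree-dimension at most `k`: distances and
geodesic intervals in a box product are computed coordinatewise, and trees are median graphs.
Give the vertex `x` of the product the bag `⋂ᵢ βᵢ(xᵢ)`. The support of a vertex of `G` is then the
product of its subtrees, hence convex, since subtrees of a tree are convex; an edge of `G` lies in
a bag of every decomposition, hence in a product bag; and two non-adjacent vertices never share a
product bag, since some decomposition separates them.
-/

namespace SimpleGraph

section Tree

variable {A : Type} {T : SimpleGraph A}

lemma Walk.IsPath.append_of_support_inter {u v w : A} {p : T.Walk u v} {q : T.Walk v w}
    (hp : p.IsPath) (hq : q.IsPath) (hpq : ∀ z ∈ p.support, z ∈ q.support → z = v) :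
    (p.append q).IsPath := by
  rw [Walk.isPath_def, Walk.support_append]
  refine hp.support_nodup.append hq.support_nodup.tail fun z hzp hzq => ?_
  obtain rfl := hpq z hzp (List.mem_of_mem_tail hzq)
  have hnodup := hq.support_nodup
  rw [← q.cons_tail_support, List.nodup_cons] at hnodup
  exact hnodup.1 hzq

lemma IsTree.length_eq_dist_of_isPath (ht : T.IsTree) {u v : A} {p : T.Walk u v}
    (hp : p.IsPath) : p.length = T.dist u v := by
  obtain ⟨q, hq, hqd⟩ := ht.connected.exists_path_of_dist u v
  rw [(ht.existsUnique_path u v).unique hp hq, hqd]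

lemma IsTree.mem_geoInterval_iff (ht : T.IsTree) {u v x : A} {p : T.Walk u v}
    (hp : p.IsPath) : x ∈ geoInterval T u v ↔ x ∈ p.support := by
  classical
  constructor
  · intro hx
    obtain ⟨a, ha⟩ := ht.connected.exists_walk_length_eq_dist u x
    obtain ⟨b, hb⟩ := ht.connected.exists_walk_length_eq_dist x v
    have hab : (a.append b).IsPath :=
      (a.append b).isPath_of_length_eq_dist (by rw [Walk.length_append, ha, hb]; exact hx.symm)
    rw [(ht.existsUnique_path u v).unique hp hab]
    exact (Walk.mem_support_append_iff _ _).2 (Or.inl a.end_mem_support)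
  · intro hx
    have hsplit := congrArg Walk.length (p.take_spec hx)
    rw [Walk.length_append, ht.length_eq_dist_of_isPath hp,
      ht.length_eq_dist_of_isPath (hp.takeUntil hx),
      ht.length_eq_dist_of_isPath (hp.dropUntil hx)] at hsplit
    exact hsplit.symm

lemma IsTree.eq_of_mem_geoInterval_of_dist_eq (ht : T.IsTree) {u v x y : A}
    (hx : x ∈ geoInterval T u v) (hy : y ∈ geoInterval T u v)
    (hxy : T.dist u x = T.dist u y) : x = y := by
  classical
  obtain ⟨p, hp, -⟩ := ht.connected.exists_path_of_dist u v
  have hgetVert : ∀ z ∈ geoInterval T u v, p.getVert (T.dist u z) = z := fun z hz => by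
    have hzp := (ht.mem_geoInterval_iff hp).1 hz
    rw [← ht.length_eq_dist_of_isPath (hp.takeUntil hzp), p.getVert_length_takeUntil hzp]
  rw [← hgetVert x hx, ← hgetVert y hy, hxy]

lemma IsTree.exists_mem_geoInterval_inter (ht : T.IsTree) (u v w : A) :
    ∃ m, m ∈ geoInterval T u v ∩ geoInterval T u w ∩ geoInterval T v w := by
  classical
  obtain ⟨p, hp, -⟩ := ht.connected.exists_path_of_dist v w
  -- the vertex of the `v`–`w` path closest to `u` is the median
  obtain ⟨m, hm, hmin⟩ :=
    p.support.toFinset.exists_min_image (T.dist u) ⟨v, by simp [Walk.start_mem_support]⟩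
  rw [List.mem_toFinset] at hm
  obtain ⟨r, hr, -⟩ := ht.connected.exists_path_of_dist u m
  have hrp : ∀ z ∈ r.support, z ∈ p.support → z = m := fun z hzr hzp => by
    have hz : T.dist u m = T.dist u z + T.dist z m := (ht.mem_geoInterval_iff hr).2 hzr
    have := hmin z (List.mem_toFinset.2 hzp)
    exact ht.connected.dist_eq_zero_iff.1 (by omega)
  have hmem : ∀ {x} (s : T.Walk m x), s.IsPath → (∀ z ∈ s.support, z ∈ p.support) →
      m ∈ geoInterval T u x := fun s hs hsp =>
    have hrs := hr.append_of_support_inter hs fun z hzr hzs => hrp z hzr (hsp z hzs)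
    (ht.mem_geoInterval_iff hrs).2 ((Walk.mem_support_append_iff _ _).2 (Or.inl r.end_mem_support))
  refine ⟨m, ⟨hmem _ (hp.takeUntil hm).reverse fun z hz => ?_,
    hmem _ (hp.dropUntil hm) fun z hz => p.support_dropUntil_subset_support hm hz⟩,
    (ht.mem_geoInterval_iff hp).2 hm⟩
  rw [Walk.support_reverse, List.mem_reverse] at hz
  exact p.support_takeUntil_subset_support hm hz

lemma IsTree.medianGraph (ht : T.IsTree) : MedianGraph T := by
  refine ⟨ht.connected, fun u v w => ?_⟩
  obtain ⟨m, hm⟩ := ht.exists_mem_geoInterval_inter u v w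
  refine ⟨m, hm, fun y hy => ht.eq_of_mem_geoInterval_of_dist_eq hy.1.1 hm.1.1 ?_⟩
  obtain ⟨⟨hy₁, hy₂⟩, hy₃⟩ := hy
  obtain ⟨⟨hm₁, hm₂⟩, hm₃⟩ := hm
  simp only [geoInterval, Set.mem_ofPred_eq] at hy₁ hy₂ hy₃ hm₁ hm₂ hm₃
  -- both `d(u, y)` and `d(u, m)` equal `(d(u, v) + d(u, w) - d(v, w)) / 2`
  have := T.dist_comm (u := v) (v := y)
  have := T.dist_comm (u := v) (v := m)
  omega

lemma IsTree.geoConvex_of_connected_induce (ht : T.IsTree) {S : Set A}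
    (hS : (T.induce S).Connected) : GeoConvex T S := by
  classical
  intro u hu v hv x hx
  obtain ⟨w⟩ := hS.preconnected ⟨u, hu⟩ ⟨v, hv⟩
  let p := (w.map (Embedding.induce S).toHom).bypass
  have hxp : x ∈ p.support := (ht.mem_geoInterval_iff (Walk.bypass_isPath _)).1 hx
  have hxw := Walk.support_bypass_subset_support _ hxp
  rw [Walk.support_map] at hxw
  obtain ⟨z, -, rfl⟩ := List.mem_map.1 hxw
  exact z.2

end Tree

section BoxProdPi

variable {ι : Type} {B : ι → Type} {T : ∀ i, SimpleGraph (B i)}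

def boxProdPiUpdate [DecidableEq ι] (x : ∀ i, B i) (i : ι) : T i →g boxProdPi T where
  toFun a := Function.update x i a
  map_rel' h := ⟨i, by simpa using h, fun j hj => by simp [Function.update_of_ne hj]⟩

lemma exists_walk_boxProdPi_length_le_sum (hT : ∀ i, (T i).Connected) (s : Finset ι)
    {x y : ∀ i, B i} (hxy : ∀ i ∉ s, x i = y i) :
    ∃ W : (boxProdPi T).Walk x y, W.length ≤ ∑ i ∈ s, (T i).dist (x i) (y i) := by
  classical
  induction s using Finset.induction_on generalizing x with
  | empty => exact ⟨Walk.nil.copy rfl (funext fun i => hxy i (by simp)), by simp⟩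
  | @insert i s hi ih =>
    obtain ⟨w, hw⟩ := (hT i).exists_walk_length_eq_dist (x i) (y i)
    obtain ⟨W, hW⟩ := ih (x := Function.update x i (y i)) fun j hj => by
      by_cases hji : j = i
      · subst hji; simp
      · rw [Function.update_of_ne hji]; exact hxy j (by simp [hji, hj])
    have hsum : ∑ j ∈ s, (T j).dist (Function.update x i (y i) j) (y j) =
        ∑ j ∈ s, (T j).dist (x j) (y j) :=
      Finset.sum_congr rfl fun j hj => by
        rw [Function.update_of_ne (by rintro rfl; exact hi hj)]
    obtain ⟨W₁, hW₁⟩ : ∃ W₁ : (boxProdPi T).Walk x (Function.update x i (y i)),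
        W₁.length = w.length :=
      ⟨(w.map (boxProdPiUpdate x i)).copy (Function.update_eq_self i x) rfl,
        (Walk.length_copy _ _ _).trans (Walk.length_map _ _)⟩
    refine ⟨W₁.append W, ?_⟩
    rw [Walk.length_append, hW₁, hw, Finset.sum_insert hi]
    omega

variable [Fintype ι]

lemma sum_dist_le_length_of_walk_boxProdPi (hT : ∀ i, (T i).Connected) {x y : ∀ i, B i}
    (W : (boxProdPi T).Walk x y) : ∑ i, (T i).dist (x i) (y i) ≤ W.length := by
  induction W with
  | nil => simp
  | @cons x z y h W ih =>
    rw [Walk.length_cons]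
    obtain ⟨i₀, hadj, heq⟩ := h
    have hstep : ∑ i, (T i).dist (x i) (z i) = 1 := by
      rw [Finset.sum_eq_single i₀ (fun j _ hj => by rw [heq j hj, dist_self]) (by simp)]
      exact dist_eq_one_iff_adj.2 hadj
    have htri : ∑ i, (T i).dist (x i) (y i) ≤
        ∑ i, (T i).dist (x i) (z i) + ∑ i, (T i).dist (z i) (y i) := by
      rw [← Finset.sum_add_distrib]
      exact Finset.sum_le_sum fun i _ => (hT i).dist_triangle
    omega

lemma boxProdPi_connected (hT : ∀ i, (T i).Connected) : (boxProdPi T).Connected := by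
  have : Nonempty (∀ i, B i) := ⟨fun i => (hT i).nonempty.some⟩
  refine Connected.mk fun x y => ?_
  obtain ⟨W, -⟩ :=
    exists_walk_boxProdPi_length_le_sum hT Finset.univ (x := x) (y := y) (by simp)
  exact W.reachable

lemma boxProdPi_dist (hT : ∀ i, (T i).Connected) (x y : ∀ i, B i) :
    (boxProdPi T).dist x y = ∑ i, (T i).dist (x i) (y i) := by
  obtain ⟨W, hW⟩ :=
    exists_walk_boxProdPi_length_le_sum hT Finset.univ (x := x) (y := y) (by simp)
  obtain ⟨W₀, hW₀⟩ := W.reachable.exists_walk_length_eq_dist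
  exact le_antisymm ((dist_le W).trans hW) (hW₀ ▸ sum_dist_le_length_of_walk_boxProdPi hT W₀)

lemma mem_geoInterval_boxProdPi_iff (hT : ∀ i, (T i).Connected) {u v x : ∀ i, B i} :
    x ∈ geoInterval (boxProdPi T) u v ↔ ∀ i, x i ∈ geoInterval (T i) (u i) (v i) := by
  simp only [geoInterval, Set.mem_ofPred_eq, boxProdPi_dist hT, ← Finset.sum_add_distrib]
  rw [Finset.sum_eq_sum_iff_of_le fun i _ => (hT i).dist_triangle]
  simp

lemma MedianGraph.boxProdPi (hT : ∀ i, MedianGraph (T i)) : MedianGraph (boxProdPi T) := by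
  have hconn : ∀ i, (T i).Connected := fun i => (hT i).1
  refine ⟨boxProdPi_connected hconn, fun u v w => ?_⟩
  choose m hm hm_unique using fun i => (hT i).2 (u i) (v i) (w i)
  simp only [Set.mem_inter_iff, mem_geoInterval_boxProdPi_iff hconn]
  exact ⟨m, ⟨⟨fun i => (hm i).1.1, fun i => (hm i).1.2⟩, fun i => (hm i).2⟩,
    fun y ⟨⟨hy₁, hy₂⟩, hy₃⟩ => funext fun i => hm_unique i (y i) ⟨⟨hy₁ i, hy₂ i⟩, hy₃ i⟩⟩

lemma GeoConvex.boxProdPi (hT : ∀ i, (T i).Connected) {S : ∀ i, Set (B i)}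
    (hS : ∀ i, GeoConvex (T i) (S i)) : GeoConvex (boxProdPi T) {x | ∀ i, x i ∈ S i} :=
  fun _ hu _ hv _ hx i => hS i _ (hu i) _ (hv i) ((mem_geoInterval_boxProdPi_iff hT).1 hx i)

end BoxProdPi

end SimpleGraph

open SimpleGraph in
theorem hasCompleteTMD_of_treeDecomps {V : Type} (G : SimpleGraph V) {k : ℕ} {B : Fin k → Type}
    [∀ i, Fintype (B i)] {T : ∀ i, SimpleGraph (B i)} {β : ∀ i, B i → Set V}
    (hTD : ∀ i, IsTreeDecomp G (T i) (β i))
    (hsep : ∀ u v : V, u ≠ v → ¬ G.Adj u v → ∃ i, ∀ t, ¬ (u ∈ β i t ∧ v ∈ β i t)) :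
    HasCompleteTMD G k := by
  have hconn : ∀ i, (T i).Connected := fun i => (hTD i).isTree.connected
  refine ⟨∀ i, B i, inferInstance, boxProdPi T, fun x => {v | ∀ i, v ∈ β i (x i)},
    MedianGraph.boxProdPi fun i => (hTD i).isTree.medianGraph,
    ⟨B, inferInstance, T, fun i => (hTD i).isTree, id, fun _ _ => rfl⟩,
    fun v => ⟨?_, ?_⟩, fun u v huv => ?_, fun x u hu v hv hne => ?_⟩
  · choose t ht using fun i => (hTD i).exists_bag v
    exact ⟨t, ht⟩
  · exact GeoConvex.boxProdPi hconn fun i =>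
      (hTD i).isTree.geoConvex_of_connected_induce ((hTD i).support_connected v)
  · choose t ht using fun i => (hTD i).adj_bag huv
    exact ⟨t, fun i => (ht i).1, fun i => (ht i).2⟩
  · by_contra hadj
    obtain ⟨i, hi⟩ := hsep u v hne hadj
    exact hi (x i) ⟨hu i, hv i⟩

/-- From a non-edge-separating family of `k` tree-decompositions of `G`
one obtains a complete `k'`-tree-median-decomposition of `G` for some `k' ≤ k`;
in particular `tmd G ≤ k`. -/
theorem stmt_6 {V : Type} [Fintype V] (G : SimpleGraph V) (k : ℕ) (hk : 0 < k)
    (B : Fin k → Type) (Bfin : ∀ i, Fintype (B i))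
    (T : ∀ i, SimpleGraph (B i)) (β : ∀ i, B i → Set V)
    (hTD : ∀ i, IsTreeDecomp G (T i) (β i))
    (hsep : ∀ u v : V, u ≠ v → ¬ G.Adj u v →
      ∃ i, ∀ t, ¬ (u ∈ β i t ∧ v ∈ β i t)) :
    (∃ k' ≤ k, HasCompleteTMD G k') ∧ tmd G ≤ k := by
  have h := hasCompleteTMD_of_treeDecomps G hTD hsep
  exact ⟨⟨k, le_rfl, h⟩, Nat.sInf_le ⟨hk, h⟩⟩
end

section
/- Let G be a finite connected graph with at least one vertex and let k be a positive integer with pw(G) ≤ k. Then there exists an induced path Q in G (with at least one vertex) such that the graph G − V(Q) obtained by deleting the vertices of Q satisfies pw(G − V(Q)) ≤ k − 1 (vacuously if G − V(Q) has no vertices). -/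
open SimpleGraph

/-!
Take a path-decomposition with bags `β 0, …, β (n - 1)`. Every vertex lies in an interval of bags
and every edge lies in some bag, so a walk from a vertex of bag `a` to a vertex of bag `c` meets
every bag `β t` with `a ≤ t ≤ c`. Hence a shortest walk from a vertex of the first nonempty bag to
a vertex of the last nonempty bag meets every nonempty bag. Such a walk is an induced path, and
deleting it removes at least one vertex from every nonempty bag.
-/

namespace SimpleGraph

variable {V : Type*} {G : SimpleGraph V}

def Subgraph.IsInduced.coeIsoInduce {G' : G.Subgraph} (h : G'.IsInduced) :
    G'.coe ≃g G.induce G'.verts where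
  toEquiv := Equiv.refl _
  map_rel_iff' := h.adj.symm

namespace Walk

variable {u v : V} {p : G.Walk u v}

/-- Otherwise `p.take i`, the edge, and `p.drop j` would give a shorter walk from `u` to `v`. -/
lemma eq_add_one_of_adj_getVert_of_length_eq_dist (hp : p.length = G.dist u v) {i j : ℕ}
    (hij : i < j) (hj : j ≤ p.length) (hadj : G.Adj (p.getVert i) (p.getVert j)) :
    j = i + 1 := by
  have := G.dist_le ((p.take i).append (cons hadj (p.drop j)))
  simp only [length_append, length_cons, take_length, drop_length] at this
  omega

lemma isInduced_toSubgraph_of_length_eq_dist (hp : p.length = G.dist u v) :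
    p.toSubgraph.IsInduced := by
  intro x hx y hy hxy
  rw [mem_verts_toSubgraph, mem_support_iff_exists_getVert] at hx hy
  obtain ⟨i, rfl, hi⟩ := hx
  obtain ⟨j, rfl, hj⟩ := hy
  rw [toSubgraph_adj_iff]
  rcases lt_trichotomy i j with hij | rfl | hji
  · exact ⟨i, by rw [eq_add_one_of_adj_getVert_of_length_eq_dist hp hij hj hxy], by omega⟩
  · exact absurd hxy (G.irrefl)
  · refine ⟨j, ?_, by omega⟩
    rw [eq_add_one_of_adj_getVert_of_length_eq_dist hp hji hi hxy.symm, Sym2.eq_swap]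

lemma nonempty_induce_verts_toSubgraph_iso_pathGraph (hp : p.length = G.dist u v) :
    Nonempty (G.induce p.toSubgraph.verts ≃g pathGraph (p.length + 1)) := by
  classical
  exact ⟨(isInduced_toSubgraph_of_length_eq_dist hp).coeIsoInduce.symm.trans
    (p.isPath_of_length_eq_dist hp).pathGraphIsoToSubgraph.symm⟩

end Walk

lemma pathGraph_induce_mem_of_mem_uIcc {n : ℕ} {s : Set (Fin n)} {x y : s}
    (w : ((pathGraph n).induce s).Walk x y) {t : Fin n} (ht : t ∈ Set.uIcc (x : Fin n) y) :
    t ∈ s := by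
  induction w with
  | nil =>
    rw [Set.uIcc_self, Set.mem_singleton_iff] at ht
    exact ht ▸ Subtype.prop _
  | @cons z z' _ hzz' _ ih =>
    by_cases htz : t = z
    · exact htz ▸ z.2
    · apply ih
      have hadj : (pathGraph n).Adj z z' := hzz'
      rw [pathGraph_adj] at hadj
      rw [Set.mem_uIcc] at ht ⊢
      simp only [Fin.le_def] at ht ⊢
      have := Fin.val_ne_of_ne htz
      omega

end SimpleGraph

lemma Set.ncard_sdiff_le_ncard_sub_one {α : Type*} {A S : Set α} {x : α} (hS : S.Finite)
    (hxA : x ∈ A) (hxS : x ∈ S) : (A \ S).ncard ≤ A.ncard - 1 := by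
  rcases A.infinite_or_finite with hA | hA
  · simp [(hA.sdiff hS).ncard]
  · rw [← Set.ncard_sdiff_singleton_of_mem hxA]
    exact Set.ncard_le_ncard (Set.sdiff_subset_sdiff_right (Set.singleton_subset_iff.mpr hxS))
      hA.sdiff

namespace IsTreeDecomp

section

variable {V B : Type} {G : SimpleGraph V} {T : SimpleGraph B} {β : B → Set V}

lemma map_iso {B' : Type} {T' : SimpleGraph B'} (h : IsTreeDecomp G T β) (e : T ≃g T') :
    IsTreeDecomp G T' (β ∘ e.symm) where
  isTree := e.isTree_iff.mp h.isTree
  exists_bag v := by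
    obtain ⟨t, ht⟩ := h.exists_bag v
    exact ⟨e t, by simpa using ht⟩
  adj_bag u v huv := by
    obtain ⟨t, hu, hv⟩ := h.adj_bag huv
    exact ⟨e t, by simpa using hu, by simpa using hv⟩
  support_connected v := by
    have hbij : Set.BijOn e {t | v ∈ β t} {t' | v ∈ β (e.symm t')} :=
      ⟨fun t ht => by simpa using ht, e.injective.injOn, fun t' ht' => ⟨e.symm t', ht', by simp⟩⟩
    exact (e.induce hbij).connected_iff.mp (h.support_connected v)

lemma induce (h : IsTreeDecomp G T β) (s : Set V) :
    IsTreeDecomp (G.induce s) T (fun t => Subtype.val ⁻¹' β t) where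
  isTree := h.isTree
  exists_bag v := h.exists_bag v
  adj_bag _ _ huv := h.adj_bag huv
  support_connected v := h.support_connected v

lemma pathwidthLE_induce_compl [Fintype B] {k : ℕ} {S : Set V} (h : IsTreeDecomp G T β)
    (hT : IsPathGraph T) (hwidth : ∀ t, (β t).ncard ≤ k + 1) (hS : S.Finite)
    (hmeet : ∀ t, (β t).Nonempty → (β t ∩ S).Nonempty) :
    PathwidthLE (G.induce Sᶜ) (k - 1) := by
  refine ⟨B, inferInstance, T, _, hT, h.induce Sᶜ, fun t => ?_⟩
  have hcard : (Subtype.val ⁻¹' β t : Set ↥Sᶜ).ncard = (β t \ S).ncard := by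
    rw [← Set.ncard_image_of_injective _ Subtype.val_injective, Subtype.image_preimage_coe,
      Set.inter_comm, Set.sdiff_eq]
  rw [hcard]
  rcases (β t).eq_empty_or_nonempty with hempty | hne
  · simp [hempty]
  · obtain ⟨x, hxβ, hxS⟩ := hmeet t hne
    have := Set.ncard_sdiff_le_ncard_sub_one hS hxβ hxS
    have := hwidth t
    omega

end

section

variable {V : Type} {G : SimpleGraph V} {n : ℕ} {β : Fin n → Set V}

lemma mem_of_le_of_le (h : IsTreeDecomp G (pathGraph n) β) {v : V} {a c t : Fin n}
    (ha : v ∈ β a) (hc : v ∈ β c) (hat : a ≤ t) (htc : t ≤ c) : v ∈ β t := by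
  obtain ⟨w⟩ := (h.support_connected v).preconnected ⟨a, ha⟩ ⟨c, hc⟩
  exact pathGraph_induce_mem_of_mem_uIcc w (Set.mem_uIcc.mpr (Or.inl ⟨hat, htc⟩))

lemma exists_mem_support_mem_of_le_of_le (h : IsTreeDecomp G (pathGraph n) β) {u v : V}
    (w : G.Walk u v) {a c t : Fin n} (hu : u ∈ β a) (hv : v ∈ β c) (hat : a ≤ t) (htc : t ≤ c) :
    ∃ x ∈ w.support, x ∈ β t := by
  induction w generalizing a with
  | nil => exact ⟨_, List.mem_singleton_self _, h.mem_of_le_of_le hu hv hat htc⟩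
  | @cons u _ _ huu' w ih =>
    obtain ⟨i, hi, hi'⟩ := h.adj_bag huu'
    rcases le_total t i with hti | hit
    · exact ⟨u, List.mem_cons_self, h.mem_of_le_of_le hu hi hat hti⟩
    · obtain ⟨x, hx, hxt⟩ := ih hi' hv hit
      exact ⟨x, List.mem_cons_of_mem _ hx, hxt⟩

lemma exists_shortest_walk_meets_nonempty_bags [Nonempty V] (hG : G.Connected)
    (h : IsTreeDecomp G (pathGraph n) β) :
    ∃ (u v : V) (p : G.Walk u v), p.length = G.dist u v ∧
      ∀ t, (β t).Nonempty → ∃ x ∈ p.support, x ∈ β t := by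
  classical
  let N : Finset (Fin n) := {t | (β t).Nonempty}
  have hN : N.Nonempty := by
    obtain ⟨t, ht⟩ := h.exists_bag (Classical.arbitrary V)
    exact ⟨t, Finset.mem_filter.mpr ⟨Finset.mem_univ _, ⟨_, ht⟩⟩⟩
  obtain ⟨u, hu⟩ := (Finset.mem_filter.mp (N.min'_mem hN)).2
  obtain ⟨v, hv⟩ := (Finset.mem_filter.mp (N.max'_mem hN)).2
  obtain ⟨p, hp⟩ := hG.exists_walk_length_eq_dist u v
  refine ⟨u, v, p, hp, fun t ht => ?_⟩
  have htN : t ∈ N := Finset.mem_filter.mpr ⟨Finset.mem_univ _, ht⟩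
  exact h.exists_mem_support_mem_of_le_of_le p hu hv (N.min'_le t htN) (N.le_max' t htN)

end

end IsTreeDecomp

theorem stmt_16_general {V : Type} [Nonempty V] (G : SimpleGraph V)
    (hconn : G.Connected) (k : ℕ) (hpw : PathwidthLE G k) :
    ∃ S : Set V, S.Nonempty ∧
      (∃ n : ℕ, Nonempty (G.induce S ≃g SimpleGraph.pathGraph n)) ∧
      PathwidthLE (G.induce (Sᶜ : Set V)) (k - 1) := by
  obtain ⟨B, _, P, β, ⟨n, ⟨e⟩⟩, hβ, hwidth⟩ := hpw
  have hβ' := hβ.map_iso e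
  obtain ⟨u, v, p, hp, hmeet⟩ := hβ'.exists_shortest_walk_meets_nonempty_bags hconn
  refine ⟨p.toSubgraph.verts, ⟨u, p.start_mem_verts_toSubgraph⟩,
    ⟨_, p.nonempty_induce_verts_toSubgraph_iso_pathGraph hp⟩, ?_⟩
  refine hβ'.pathwidthLE_induce_compl ⟨n, ⟨Iso.refl⟩⟩ (fun t => hwidth _)
    (p.verts_toSubgraph ▸ p.support.finite_toSet) fun t ht => ?_
  obtain ⟨x, hxp, hxt⟩ := hmeet t ht
  exact ⟨x, hxt, p.mem_verts_toSubgraph.mpr hxp⟩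

/-- Every nonempty connected graph of path-width at most `k` contains an
induced path whose deletion leaves a graph of path-width at most `k - 1`. -/
theorem stmt_16 {V : Type} [Fintype V] [Nonempty V] (G : SimpleGraph V)
    (hconn : G.Connected) (k : ℕ) (hk : 0 < k) (hpw : PathwidthLE G k) :
    ∃ S : Set V, S.Nonempty ∧
      (∃ n : ℕ, Nonempty (G.induce S ≃g SimpleGraph.pathGraph n)) ∧
      PathwidthLE (G.induce (Sᶜ : Set V)) (k - 1) :=
  stmt_16_general G hconn k hpw
end

section
/- Let G be a finite simple graph with at least one vertex and let k be a positive integer. Then χ(G) ≤ k if and only if chor(G · K₂ᶜ) ≤ k, where G · K₂ᶜ is the lexicographic product of G with the edgeless graph on two vertices. -/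
/-!
A proper `k`-colouring `c` of `G` writes `G` as the intersection of the graphs
`Hᵢ = G ⊔ (complete graph on {x | c x ≠ i})`; each `Hᵢ` is split (a clique plus the independent
colour class `i`), hence chordal. Applied to `G · K₂ᶜ`, which is `k`-colourable whenever `G` is,
this gives `chor (G · K₂ᶜ) ≤ χ(G)`. Conversely, if `G · K₂ᶜ` is the intersection of chordal
`H₁, …, H_k`, colour `u` by some `i` for which `Hᵢ` misses the non-edge `(u,0)(u,1)`. If adjacent
`u, v` received the same colour `i`, then `(u,0), (v,0), (u,1), (v,1)` would be an induced `C₄`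
in `Hᵢ`.
-/

open SimpleGraph

theorem cycleGraph_adj_add_one {n : ℕ} (a : Fin (n + 2)) : (cycleGraph (n + 2)).Adj a (a + 1) :=
  cycleGraph_adj.2 (Or.inr (add_sub_cancel_left a 1))

theorem cycleGraph_not_adj_add_two {n : ℕ} (a : Fin (n + 4)) :
    ¬(cycleGraph (n + 4)).Adj a (a + 2) := by
  rw [cycleGraph_adj, add_sub_cancel_left, sub_add_cancel_left]
  simp [Fin.ext_iff, Fin.val_neg, Nat.mod_eq_of_lt (by omega : 2 < n + 4)]

theorem chordal_of_isClique_of_isIndepSet_compl {W : Type} {H : SimpleGraph W} {C : Set W}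
    (hC : H.IsClique C) (hI : H.IsIndepSet Cᶜ) : Chordal H := by
  intro n hn
  obtain ⟨m, rfl⟩ := Nat.exists_eq_add_of_le' hn
  refine ⟨fun f => ?_⟩
  have not_both_out : ∀ a, f a ∈ C ∨ f (a + 1) ∈ C := by
    intro a
    by_contra! h
    have hadj := f.map_rel_iff.2 (cycleGraph_adj_add_one a)
    exact hI h.1 h.2 hadj.ne hadj
  have not_both_in : ∀ a, f a ∉ C ∨ f (a + 2) ∉ C := by
    intro a
    by_contra! h
    have hne : a ≠ a + 2 := by simp [Fin.ext_iff, Nat.mod_eq_of_lt (by omega : 2 < m + 4)]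
    exact cycleGraph_not_adj_add_two a (f.map_rel_iff.1 (hC h.1 h.2 (f.injective.ne hne)))
  have all_in : ∀ a, f (a + 1) ∈ C := by
    intro a
    by_contra h
    have h2 : f (a + 2) ∈ C := by
      have := (not_both_out (a + 1)).resolve_left h
      rwa [add_assoc] at this
    exact (not_both_in a).elim (· ((not_both_out a).resolve_right h)) (· h2)
  refine (not_both_in 1).elim (· (by simpa using all_in 0)) (· ?_)
  simpa [add_comm] using all_in 2

theorem Chordal.adj_or_adj_of_cycle {W : Type} {H : SimpleGraph W} (hH : Chordal H)
    {a b c d : W} (hab : H.Adj a b) (hbc : H.Adj b c) (hcd : H.Adj c d) (hda : H.Adj d a)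
    (hac : a ≠ c) (hbd : b ≠ d) : H.Adj a c ∨ H.Adj b d := by
  by_contra! ⟨hac', hbd'⟩
  refine (hH 4 le_rfl).false ⟨⟨![a, b, c, d], ?_⟩, ?_⟩
  · intro i j hij
    fin_cases i <;> fin_cases j <;>
      simp_all [hab.ne, hbc.ne, hcd.ne, hda.ne, hab.ne', hbc.ne', hcd.ne', hda.ne', hac.symm,
        hbd.symm]
  · intro i j
    show H.Adj (![a, b, c, d] i) (![a, b, c, d] j) ↔ _
    fin_cases i <;> fin_cases j <;>
      simp [cycleGraph_adj', hab, hbc, hcd, hda, hab.symm, hbc.symm, hcd.symm, hda.symm,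
        hac', hbd', H.adj_comm c a, H.adj_comm d b] <;> decide

def IsChordalIntersection {V ι : Type} (G : SimpleGraph V) (H : ι → SimpleGraph V) : Prop :=
  (∀ i, Chordal (H i)) ∧ ∀ u v, G.Adj u v ↔ ∀ i, (H i).Adj u v

theorem SimpleGraph.Coloring.isChordalIntersection {V ι : Type} {G : SimpleGraph V}
    (c : G.Coloring ι) :
    IsChordalIntersection G fun i => G ⊔ fromRel fun x y => c x ≠ i ∧ c y ≠ i := by
  refine ⟨fun i => chordal_of_isClique_of_isIndepSet_compl (C := {x | c x ≠ i}) ?_ ?_, ?_⟩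
  · intro x hx y hy hxy
    exact Or.inr ⟨hxy, Or.inl ⟨hx, hy⟩⟩
  · rintro x hx y hy - (hG | ⟨-, ⟨hx', -⟩ | ⟨-, hx'⟩⟩)
    · exact c.valid hG ((not_not.1 hx).trans (not_not.1 hy).symm)
    all_goals exact hx' (by simpa using hx)
  · refine fun u v => ⟨fun h i => Or.inl h, fun h => ?_⟩
    obtain hG | ⟨-, ⟨hu, -⟩ | ⟨-, hu⟩⟩ := h (c u)
    · exact hG
    all_goals exact absurd rfl hu

theorem chor_le_of_colorable {V : Type} [Fintype V] {G : SimpleGraph V} {k : ℕ} (hk : 0 < k)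
    (h : G.Colorable k) : chor G ≤ k :=
  Nat.sInf_le ⟨hk, _, h.some.isChordalIntersection⟩

theorem exists_isChordalIntersection_fin_chor {V : Type} [Fintype V] (G : SimpleGraph V) :
    ∃ H : Fin (chor G) → SimpleGraph V, IsChordalIntersection G H := by
  have hc : G.Colorable (Fintype.card V + 1) := G.colorable_of_fintype.mono (Nat.le_succ _)
  exact (Nat.sInf_mem (s := {k | 0 < k ∧ ∃ H : Fin k → SimpleGraph V, IsChordalIntersection G H})
    ⟨_, Nat.succ_pos _, _, hc.some.isChordalIntersection⟩).2

theorem lexProd_bot_adj {V W : Type} {G : SimpleGraph V} {x y : V × W} :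
    (lexProd G (⊥ : SimpleGraph W)).Adj x y ↔ G.Adj x.1 y.1 :=
  ⟨fun h => h.resolve_right fun h => h.2, Or.inl⟩

theorem SimpleGraph.Colorable.lexProd_bot {V W : Type} {G : SimpleGraph V} {k : ℕ}
    (h : G.Colorable k) :
    (lexProd G (⊥ : SimpleGraph W)).Colorable k :=
  h.of_hom ⟨Prod.fst, lexProd_bot_adj.1⟩

theorem IsChordalIntersection.nonempty_coloring_of_lexProd_bot {V W ι : Type} [Nontrivial W]
    {G : SimpleGraph V} {H : ι → SimpleGraph (V × W)}
    (hH : IsChordalIntersection (lexProd G ⊥) H) : Nonempty (G.Coloring ι) := by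
  obtain ⟨w₀, w₁, hw⟩ := exists_pair_ne W
  have h_missing : ∀ u, ∃ i, ¬(H i).Adj (u, w₀) (u, w₁) := by
    intro u
    by_contra! h
    exact G.irrefl (lexProd_bot_adj.1 ((hH.2 (u, w₀) (u, w₁)).2 h))
  choose col hcol using h_missing
  refine ⟨Coloring.mk col fun {u v} huv hcc => ?_⟩
  have hadj : ∀ a b, (H (col u)).Adj (u, a) (v, b) := fun a b =>
    (hH.2 _ _).1 (lexProd_bot_adj.2 huv) _
  have hadj' : ∀ a b, (H (col u)).Adj (v, a) (u, b) := fun a b => (hadj b a).symm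
  refine ((hH.1 _).adj_or_adj_of_cycle (hadj w₀ w₀) (hadj' w₀ w₁) (hadj w₁ w₁) (hadj' w₁ w₀)
    (by simpa using hw) (by simpa using hw)).elim (hcol u) ?_
  rw [hcc]
  exact hcol v

theorem stmt_19_general {V : Type} [Fintype V] (G : SimpleGraph V)
    (k : ℕ) (hk : 0 < k) :
    G.chromaticNumber ≤ (k : ℕ∞) ↔
      chor (lexProd G (⊥ : SimpleGraph (Fin 2))) ≤ k := by
  rw [chromaticNumber_le_iff_colorable]
  refine ⟨fun h => chor_le_of_colorable hk h.lexProd_bot, fun h => ?_⟩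
  obtain ⟨H, hH⟩ := exists_isChordalIntersection_fin_chor (lexProd G (⊥ : SimpleGraph (Fin 2)))
  exact Colorable.mono h hH.nonempty_coloring_of_lexProd_bot

/-- `χ(G) ≤ k` iff the lexicographic product of `G` with the edgeless graph
on two vertices has chordality at most `k`. -/
theorem stmt_19 {V : Type} [Fintype V] [Nonempty V] (G : SimpleGraph V)
    (k : ℕ) (hk : 0 < k) :
    G.chromaticNumber ≤ (k : ℕ∞) ↔
      chor (lexProd G (⊥ : SimpleGraph (Fin 2))) ≤ k :=
  stmt_19_general G k hk
end
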